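/- Let ω > 0 and let λ₁, λ₂ be nonzero complex numbers with λ₁ + λ₂ ≠ 0, such that for each j ∈ {1,2} it is not the case that Re(λ_j) = 0 and |λ_j| ≤ ω. Then ∫_{−ω}^{ω} ( (iν − λ₁)·(−iν − λ₂) )⁻¹ dν = (2/(λ₁ + λ₂))·( atan(ω/λ₁) + atan(ω/λ₂) ), where the integral is the interval integral of a ℂ-valued function of the real variable ν. -/

import Mathlib

/-! Partial fractions split the integrand as `(λ₁ + λ₂)⁻¹ * ((λ₁ - iν)⁻¹ + (λ₂ + iν)⁻¹)`.
On `[-ω, ω]` the function `ν ↦ -i log (1 + iν/λ)` is an antiderivative of `(λ + iν)⁻¹`: the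
hypothesis on `λ` keeps `1 + iν/λ` off the branch cut `(-∞, 0]` (if `Re λ = 0` then
`|iν/λ| < 1`, otherwise `1 + iν/λ` is non-real for `ν ≠ 0`). Its increment over `[-ω, ω]` is
`2 atan (ω/λ)`, and the term `(λ - iν)⁻¹` reduces to this one under `ν ↦ -ν`. -/

open Complex MeasureTheory intervalIntegral

/-- Principal complex arctangent: `atan z = (1/(2i))·(log(1+iz) − log(1−iz))`,
where `log` is the principal branch of the complex logarithm. -/
noncomputable def catan (z : ℂ) : ℂ :=
  (2 * Complex.I)⁻¹ * (Complex.log (1 + Complex.I * z) - Complex.log (1 - Complex.I * z))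

theorem abs_le_of_mem_uIcc_neg_self {ω ν : ℝ} (hω : 0 ≤ ω) (hν : ν ∈ Set.uIcc (-ω) ω) :
    |ν| ≤ ω := by
  rw [Set.uIcc_of_le (by linarith)] at hν
  exact abs_le.mpr hν

namespace Complex

variable {ω : ℝ} {lam : ℂ}

theorem add_I_mul_ne_zero (hlam : ¬(lam.re = 0 ∧ ‖lam‖ ≤ ω)) {t : ℝ} (ht : |t| ≤ ω) :
    lam + I * t ≠ 0 := by
  intro h
  rw [add_eq_zero_iff_eq_neg.mp h] at hlam
  simp_all

theorem sub_I_mul_ne_zero (hlam : ¬(lam.re = 0 ∧ ‖lam‖ ≤ ω)) {t : ℝ} (ht : |t| ≤ ω) :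
    lam - I * t ≠ 0 := by
  simpa [sub_eq_add_neg] using add_I_mul_ne_zero hlam (t := -t) (by rwa [abs_neg])

theorem one_add_I_mul_div_mem_slitPlane (hlam : ¬(lam.re = 0 ∧ ‖lam‖ ≤ ω)) {t : ℝ}
    (ht : |t| ≤ ω) : 1 + I * (t / lam) ∈ slitPlane := by
  by_cases hre : lam.re = 0
  · apply mem_slitPlane_of_norm_lt_one
    have hω : ω < ‖lam‖ := lt_of_not_ge fun h => hlam ⟨hre, h⟩
    rw [norm_mul, norm_I, one_mul, norm_div, norm_real, Real.norm_eq_abs,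
      div_lt_one (by linarith [abs_nonneg t])]
    linarith
  · rcases eq_or_ne t 0 with rfl | ht0
    · simp
    · have hlam0 : lam ≠ 0 := fun h => hre (by simp [h])
      rw [mem_slitPlane_iff]
      right
      simp [div_re, ht0, hre, hlam0]

theorem hasDerivAt_neg_I_mul_log_one_add_I_mul_div (hlam : lam ≠ 0) {t : ℝ}
    (ht : 1 + I * (t / lam) ∈ slitPlane) :
    HasDerivAt (fun ν : ℝ => -I * log (1 + I * (ν / lam))) (lam + I * t)⁻¹ t := by
  have hinner : HasDerivAt (fun ν : ℝ => 1 + I * (ν / lam)) (I * (1 / lam)) t :=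
    (((hasDerivAt_id t).ofReal_comp.div_const lam).const_mul I).const_add 1
  refine (((hasDerivAt_log ht).comp t hinner).const_mul (-I)).congr_deriv ?_
  rw [show 1 + I * (t / lam) = (lam + I * t) / lam by field_simp, inv_div]
  field_simp
  rw [I_sq]
  ring

theorem intervalIntegrable_inv_add_I_mul (hω : 0 ≤ ω) (hlam : ¬(lam.re = 0 ∧ ‖lam‖ ≤ ω)) :
    IntervalIntegrable (fun ν : ℝ => (lam + I * ν)⁻¹) volume (-ω) ω :=
  (ContinuousOn.inv₀ (by fun_prop) fun _ hν =>
    add_I_mul_ne_zero hlam (abs_le_of_mem_uIcc_neg_self hω hν)).intervalIntegrable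

theorem intervalIntegrable_inv_sub_I_mul (hω : 0 ≤ ω) (hlam : ¬(lam.re = 0 ∧ ‖lam‖ ≤ ω)) :
    IntervalIntegrable (fun ν : ℝ => (lam - I * ν)⁻¹) volume (-ω) ω :=
  (ContinuousOn.inv₀ (by fun_prop) fun _ hν =>
    sub_I_mul_ne_zero hlam (abs_le_of_mem_uIcc_neg_self hω hν)).intervalIntegrable

theorem integral_inv_add_I_mul (hω : 0 ≤ ω) (hlam : ¬(lam.re = 0 ∧ ‖lam‖ ≤ ω)) :
    ∫ ν : ℝ in (-ω)..ω, (lam + I * ν)⁻¹ = 2 * catan (ω / lam) := by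
  have hlam0 : lam ≠ 0 := by simpa using add_I_mul_ne_zero hlam (t := 0) (by simpa)
  rw [integral_eq_sub_of_hasDerivAt (fun ν hν => hasDerivAt_neg_I_mul_log_one_add_I_mul_div hlam0
    (one_add_I_mul_div_mem_slitPlane hlam (abs_le_of_mem_uIcc_neg_self hω hν)))
    (intervalIntegrable_inv_add_I_mul hω hlam)]
  simp only [catan, ofReal_neg, neg_div, mul_neg, mul_inv, inv_I, ← sub_eq_add_neg]
  ring

theorem integral_inv_sub_I_mul (hω : 0 ≤ ω) (hlam : ¬(lam.re = 0 ∧ ‖lam‖ ≤ ω)) :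
    ∫ ν : ℝ in (-ω)..ω, (lam - I * ν)⁻¹ = 2 * catan (ω / lam) := by
  have h := integral_comp_neg (a := -ω) (b := ω) fun ν : ℝ => (lam + I * ν)⁻¹
  rw [neg_neg, integral_inv_add_I_mul hω hlam] at h
  simpa [sub_eq_add_neg] using h

end Complex

theorem stmt_9_general (ω : ℝ) (hω : 0 < ω) (lam₁ lam₂ : ℂ)
    (hsum : lam₁ + lam₂ ≠ 0)
    (hb₁ : ¬ (lam₁.re = 0 ∧ ‖lam₁‖ ≤ ω))
    (hb₂ : ¬ (lam₂.re = 0 ∧ ‖lam₂‖ ≤ ω)) :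
    (∫ ν : ℝ in (-ω)..ω,
        ((Complex.I * (ν : ℂ) - lam₁) * (-(Complex.I * (ν : ℂ)) - lam₂))⁻¹)
      = (2 / (lam₁ + lam₂)) * (catan ((ω : ℂ) / lam₁) + catan ((ω : ℂ) / lam₂)) := by
  calc _ = ∫ ν : ℝ in (-ω)..ω, (lam₁ + lam₂)⁻¹ * ((lam₁ - I * ν)⁻¹ + (lam₂ + I * ν)⁻¹) := by
        refine integral_congr fun ν hν => ?_
        have h₁ := sub_I_mul_ne_zero hb₁ (abs_le_of_mem_uIcc_neg_self hω.le hν)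
        have h₂ := add_I_mul_ne_zero hb₂ (abs_le_of_mem_uIcc_neg_self hω.le hν)
        rw [inv_add_inv h₁ h₂, sub_add_add_cancel, ← mul_div_assoc, inv_mul_cancel₀ hsum,
          one_div]
        ring
    _ = (lam₁ + lam₂)⁻¹ * (2 * catan (ω / lam₁) + 2 * catan (ω / lam₂)) := by
        rw [intervalIntegral.integral_const_mul,
          integral_add (intervalIntegrable_inv_sub_I_mul hω.le hb₁)
            (intervalIntegrable_inv_add_I_mul hω.le hb₂),
          integral_inv_sub_I_mul hω.le hb₁, integral_inv_add_I_mul hω.le hb₂]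
    _ = _ := by ring

theorem stmt_9 (ω : ℝ) (hω : 0 < ω) (lam₁ lam₂ : ℂ)
    (h₁ : lam₁ ≠ 0) (h₂ : lam₂ ≠ 0) (hsum : lam₁ + lam₂ ≠ 0)
    (hb₁ : ¬ (lam₁.re = 0 ∧ ‖lam₁‖ ≤ ω))
    (hb₂ : ¬ (lam₂.re = 0 ∧ ‖lam₂‖ ≤ ω)) :
    (∫ ν : ℝ in (-ω)..ω,
        ((Complex.I * (ν : ℂ) - lam₁) * (-(Complex.I * (ν : ℂ)) - lam₂))⁻¹)
      = (2 / (lam₁ + lam₂)) * (catan ((ω : ℂ) / lam₁) + catan ((ω : ℂ) / lam₂)) :=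
  stmt_9_general ω hω lam₁ lam₂ hsum hb₁ hb₂
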